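/- For bounded operators A, B, X on a reproducing kernel Hilbert space, ber(A*XB)² ≤ ‖X‖² · ber(A*A) · ber(B*B). -/

import Mathlib

/-! Since `⟪A* X B k, k⟫ = ⟪X B k, A k⟫`, Cauchy–Schwarz bounds each Berezin symbol of `A* X B`
by `‖X‖ ‖A k‖ ‖B k‖`, and `‖A k‖² = ⟪A* A k, k⟫ ≤ ber(A* A)`, likewise for `B`. -/

variable {E : Type*} [NormedAddCommGroup E] [InnerProductSpace ℂ E] [CompleteSpace E] {Ω : Type*}

/-- Berezin number of `A` w.r.t. the family of normalized reproducing kernels `k`. -/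
noncomputable def ber (k : Ω → E) (A : E →L[ℂ] E) : ℝ :=
  ⨆ p : Ω, ‖(inner ℂ (A (k p)) (k p) : ℂ)‖

noncomputable def adj (A : E →L[ℂ] E) : E →L[ℂ] E := ContinuousLinearMap.adjoint A

/-- Real part `(T + T*)/2`. -/
noncomputable def reOp (T : E →L[ℂ] E) : E →L[ℂ] E := (2 : ℂ)⁻¹ • (T + adj T)

/-- Imaginary part `(T - T*)/(2i)`. -/
noncomputable def imOp (T : E →L[ℂ] E) : E →L[ℂ] E := (2 * Complex.I)⁻¹ • (T - adj T)

/-- `|X| = (X*X)^{1/2}`. -/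
noncomputable def absOp (X : E →L[ℂ] E) : E →L[ℂ] E := CFC.sqrt (adj X * X)

omit [CompleteSpace E] in
theorem norm_inner_apply_le_opNorm {x : E} (hx : ‖x‖ ≤ 1) (T : E →L[ℂ] E) :
    ‖(inner ℂ (T x) x : ℂ)‖ ≤ ‖T‖ :=
  calc ‖(inner ℂ (T x) x : ℂ)‖
      ≤ ‖T x‖ * ‖x‖ := norm_inner_le_norm _ _
    _ ≤ ‖T‖ * ‖x‖ * ‖x‖ := by gcongr; exact T.le_opNorm x
    _ ≤ ‖T‖ * 1 * 1 := by gcongr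
    _ = ‖T‖ := by ring

omit [CompleteSpace E] in
theorem ber_nonneg (k : Ω → E) (T : E →L[ℂ] E) : 0 ≤ ber k T :=
  Real.iSup_nonneg fun _ => norm_nonneg _

omit [CompleteSpace E] in
theorem ber_sq_le {k : Ω → E} {T : E →L[ℂ] E} {c : ℝ} (hc : 0 ≤ c)
    (h : ∀ p, ‖(inner ℂ (T (k p)) (k p) : ℂ)‖ ^ 2 ≤ c) : ber k T ^ 2 ≤ c := by
  rw [← Real.le_sqrt (ber_nonneg k T) hc]
  exact Real.iSup_le (fun p => (Real.le_sqrt (norm_nonneg _) hc).2 (h p)) (Real.sqrt_nonneg c)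

omit [CompleteSpace E] in
theorem norm_inner_apply_le_ber {k : Ω → E} (hk : ∀ p, ‖k p‖ ≤ 1) (T : E →L[ℂ] E) (p : Ω) :
    ‖(inner ℂ (T (k p)) (k p) : ℂ)‖ ≤ ber k T :=
  le_ciSup ⟨‖T‖, by rintro _ ⟨q, rfl⟩; exact norm_inner_apply_le_opNorm (hk q) T⟩ p

theorem inner_adj_mul_self_apply (A : E →L[ℂ] E) (x : E) :
    (inner ℂ ((adj A * A) x) x : ℂ) = (‖A x‖ ^ 2 : ℝ) := by
  rw [mul_apply_eq_comp, adj, ContinuousLinearMap.adjoint_inner_left,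
    inner_self_eq_norm_sq_to_K]
  norm_cast

theorem norm_apply_sq_le_ber_adj_mul_self {k : Ω → E} (hk : ∀ p, ‖k p‖ ≤ 1)
    (A : E →L[ℂ] E) (p : Ω) : ‖A (k p)‖ ^ 2 ≤ ber k (adj A * A) := by
  have h := norm_inner_apply_le_ber hk (adj A * A) p
  rwa [inner_adj_mul_self_apply, Complex.norm_real, Real.norm_of_nonneg (by positivity)] at h

theorem norm_inner_adj_mul_mul_apply_le (A X B : E →L[ℂ] E) (x : E) :
    ‖(inner ℂ ((adj A * X * B) x) x : ℂ)‖ ≤ ‖X‖ * ‖A x‖ * ‖B x‖ := by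
  rw [mul_apply_eq_comp, mul_apply_eq_comp, adj, ContinuousLinearMap.adjoint_inner_left]
  calc ‖(inner ℂ (X (B x)) (A x) : ℂ)‖
      ≤ ‖X (B x)‖ * ‖A x‖ := norm_inner_le_norm _ _
    _ ≤ ‖X‖ * ‖B x‖ * ‖A x‖ := by gcongr; exact X.le_opNorm _
    _ = ‖X‖ * ‖A x‖ * ‖B x‖ := by ring

theorem stmt11 (k : Ω → E) (hk : ∀ p, ‖k p‖ = 1) (A B X : E →L[ℂ] E) :
    (ber k (adj A * X * B)) ^ 2 ≤ ‖X‖ ^ 2 * ber k (adj A * A) * ber k (adj B * B) := by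
  have hk' : ∀ p, ‖k p‖ ≤ 1 := fun p => (hk p).le
  have hA := ber_nonneg k (adj A * A)
  refine ber_sq_le (mul_nonneg (mul_nonneg (sq_nonneg _) hA) (ber_nonneg k _)) fun p => ?_
  calc ‖(inner ℂ ((adj A * X * B) (k p)) (k p) : ℂ)‖ ^ 2
      ≤ (‖X‖ * ‖A (k p)‖ * ‖B (k p)‖) ^ 2 := by
        gcongr; exact norm_inner_adj_mul_mul_apply_le A X B (k p)
    _ = ‖X‖ ^ 2 * ‖A (k p)‖ ^ 2 * ‖B (k p)‖ ^ 2 := by ring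
    _ ≤ ‖X‖ ^ 2 * ber k (adj A * A) * ber k (adj B * B) := by
        gcongr
        exacts [norm_apply_sq_le_ber_adj_mul_self hk' A p, norm_apply_sq_le_ber_adj_mul_self hk' B p]
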